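/- For all integers n, m ≥ 0, a(n,m) = Σ_{ℓ=0}^{n - m - ⌊m/2⌋} C(m + ℓ − 1, ℓ) · C(n − m − ℓ − 1, n − m − ⌊m/2⌋ − ℓ) · (−1)^{n − m − ⌊m/2⌋ − ℓ}, where the sum is empty when n − m − ⌊m/2⌋ < 0, and C(a, b) denotes the generalized binomial coefficient a(a−1)⋯(a−b+1)/b! for an integer a (possibly negative) and a natural number b. -/

import Mathlib

/-- `l` is a composition of `n`: a finite list of positive integers summing to `n`
(the empty list is the unique composition of `0`). -/
def IsComposition (n : ℕ) (l : List ℕ) : Prop :=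
  (∀ x ∈ l, 0 < x) ∧ l.sum = n

/-- The Arndt condition: `σ_{2i-1} > σ_{2i}` (1-based) for every `i` with `2i ≤ ℓ`;
with 0-based indices, `l[2i] > l[2i+1]` whenever `2i+1 < l.length`. -/
def IsArndt (l : List ℕ) : Prop :=
  ∀ i : ℕ, 2 * i + 1 < l.length → l.getD (2 * i + 1) 0 < l.getD (2 * i) 0

/-- `arndt n` is the number of Arndt compositions of `n`. -/
noncomputable def arndt (n : ℕ) : ℕ :=
  Set.ncard {l : List ℕ | IsComposition n l ∧ IsArndt l}

/-- `arndtParts n m` is the number of Arndt compositions of `n` with exactly `m` parts. -/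
noncomputable def arndtParts (n m : ℕ) : ℕ :=
  Set.ncard {l : List ℕ | IsComposition n l ∧ IsArndt l ∧ l.length = m}

/-- The generalized binomial coefficient `C(a,b) = a(a-1)⋯(a-b+1)/b!` for an integer `a`
and a natural number `b` (represented as a nonnegative integer); it is `0` for negative `b`. -/
def genChoose (a b : ℤ) : ℤ :=
  if 0 ≤ b then (∏ i ∈ Finset.range b.toNat, (a - (i : ℤ))) / (b.toNat.factorial : ℤ) else 0

/-!
An Arndt composition with `m` parts is a sequence of `k = ⌊m/2⌋` pairs `(a, b)` with
`a > b ≥ 1`, followed by one more positive part when `m` is odd. There are `⌊(s-1)/2⌋` such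
pairs of sum `s`, with generating function `X³ / ((1-X)²(1+X))`, so the generating function of
`a(·, m)` is `X^(m+k) (1-X)^(-m) (1+X)^(-k)`. The coefficients of `(1-X)^(-m)` and `(1+X)^(-k)`
are `C(m+ℓ-1, ℓ)` and `(-1)^j C(k+j-1, j)` (binomial series with negative exponent), and the
formula is the coefficient of `X^n` in their product.
-/

open Finset PowerSeries

theorem genChoose_natCast_right (a : ℤ) (b : ℕ) : genChoose a b = Ring.choose a b := by
  rw [genChoose, if_pos (Int.natCast_nonneg b), Int.toNat_natCast,
    ← descPochhammer_eval_eq_prod_range, Polynomial.eval_eq_smeval,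
    Ring.descPochhammer_eq_factorial_smul_choose, nsmul_eq_mul,
    Int.mul_ediv_cancel_left _ (by exact_mod_cast b.factorial_ne_zero)]

theorem isArndt_cons_cons {a b : ℕ} {l : List ℕ} :
    IsArndt (a :: b :: l) ↔ b < a ∧ IsArndt l := by
  constructor
  · intro h
    exact ⟨by simpa using h 0 (by simp),
      fun i hi => by simpa [Nat.mul_succ] using h (i + 1) (by simp; omega)⟩
  · rintro ⟨hba, h⟩ (_ | i) hi
    · simpa using hba
    · simpa [Nat.mul_succ] using h i (by simp at hi; omega)

theorem finite_arndtCompositions (n m : ℕ) :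
    {l : List ℕ | IsComposition n l ∧ IsArndt l ∧ l.length = m}.Finite :=
  (Set.finite_range (Composition.blocks : Composition n → List ℕ)).subset
    fun l hl => ⟨⟨l, hl.1.1 _, hl.1.2⟩, rfl⟩

noncomputable def arndtFinset (n m : ℕ) : Finset (List ℕ) :=
  (finite_arndtCompositions n m).toFinset

@[simp]
theorem mem_arndtFinset {n m : ℕ} {l : List ℕ} :
    l ∈ arndtFinset n m ↔ IsComposition n l ∧ IsArndt l ∧ l.length = m :=
  Set.Finite.mem_toFinset _

theorem arndtParts_eq_card (n m : ℕ) : arndtParts n m = #(arndtFinset n m) :=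
  Set.ncard_eq_toFinset_card _ _

def arndtPairs (s : ℕ) : Finset (ℕ × ℕ) :=
  (antidiagonal s).filter fun p => 0 < p.2 ∧ p.2 < p.1

theorem card_arndtPairs (s : ℕ) : #(arndtPairs s) = (s - 1) / 2 := by
  have : arndtPairs s = (Icc 1 ((s - 1) / 2)).image fun b => (s - b, b) := by
    ext ⟨a, b⟩
    simp only [arndtPairs, mem_filter, HasAntidiagonal.mem_antidiagonal, mem_image, mem_Icc,
      Prod.mk.injEq]
    constructor
    · rintro ⟨hs, hb, hba⟩
      exact ⟨b, ⟨hb, by omega⟩, by omega, rfl⟩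
    · rintro ⟨b, hb, rfl, rfl⟩
      omega
  rw [this, card_image_of_injective _ fun _ _ h => congrArg Prod.snd h, Nat.card_Icc,
    Nat.add_sub_cancel]

theorem arndtFinset_add_two (n m : ℕ) :
    arndtFinset n (m + 2) =
      ((antidiagonal n).sigma fun st => arndtPairs st.1 ×ˢ arndtFinset st.2 m).image
        fun x => x.2.1.1 :: x.2.1.2 :: x.2.2 := by
  ext l
  simp only [mem_image, mem_sigma, mem_product, HasAntidiagonal.mem_antidiagonal,
    mem_arndtFinset, arndtPairs, mem_filter, IsComposition, Sigma.exists, Prod.exists]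
  constructor
  · rintro ⟨⟨hpos, hsum⟩, harndt, hlen⟩
    rcases l with _ | ⟨a, _ | ⟨b, t⟩⟩
    · simp at hlen
    · simp at hlen
    · simp only [List.mem_cons, forall_eq_or_imp, List.sum_cons] at hpos hsum
      rw [isArndt_cons_cons] at harndt
      exact ⟨a + b, t.sum, a, b, t, ⟨by omega, ⟨rfl, hpos.2.1, harndt.1⟩,
        ⟨hpos.2.2, rfl⟩, harndt.2, by simpa using hlen⟩, rfl⟩
  · rintro ⟨s, r, a, b, t,
      ⟨hsr, ⟨hab, hb, hba⟩, ⟨htpos, htsum⟩, harndt, hlen⟩, rfl⟩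
    refine ⟨⟨?_, ?_⟩, isArndt_cons_cons.2 ⟨hba, harndt⟩, by simp [hlen]⟩
    · simp only [List.mem_cons, forall_eq_or_imp]
      exact ⟨by omega, hb, htpos⟩
    · simp only [List.sum_cons]
      omega

theorem arndtParts_add_two (n m : ℕ) :
    arndtParts n (m + 2) = ∑ st ∈ antidiagonal n, (st.1 - 1) / 2 * arndtParts st.2 m := by
  rw [arndtParts_eq_card, arndtFinset_add_two, card_image_of_injOn, card_sigma]
  · simp only [card_product, card_arndtPairs, arndtParts_eq_card]
  · rintro ⟨⟨s, r⟩, ⟨a, b⟩, t⟩ hx ⟨⟨s', r'⟩, ⟨a', b'⟩, t'⟩ hy h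
    simp only [coe_sigma, Set.mem_sigma_iff, mem_coe, HasAntidiagonal.mem_antidiagonal,
      mem_product, arndtPairs, mem_filter] at hx hy
    simp only [List.cons.injEq] at h
    obtain ⟨rfl, rfl, rfl⟩ := h
    obtain rfl : s = s' := by omega
    obtain rfl : r = r' := by omega
    rfl

theorem arndtParts_zero_right (n : ℕ) : arndtParts n 0 = if n = 0 then 1 else 0 := by
  have : {l : List ℕ | IsComposition n l ∧ IsArndt l ∧ l.length = 0} =
      {l | l = [] ∧ n = 0} := by
    ext l
    simp only [Set.mem_ofPred_eq, List.length_eq_zero_iff, IsComposition]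
    constructor
    · rintro ⟨⟨-, rfl⟩, -, rfl⟩
      simp
    · rintro ⟨rfl, rfl⟩
      exact ⟨by simp, fun i hi => by simp at hi, rfl⟩
  rw [arndtParts, this]
  split_ifs with hn <;> simp [hn]

theorem arndtParts_one_right (n : ℕ) : arndtParts n 1 = if n = 0 then 0 else 1 := by
  have : {l : List ℕ | IsComposition n l ∧ IsArndt l ∧ l.length = 1} =
      {l | l = [n] ∧ n ≠ 0} := by
    ext l
    simp only [Set.mem_ofPred_eq, List.length_eq_one_iff, IsComposition]
    constructor
    · rintro ⟨⟨hpos, rfl⟩, -, a, rfl⟩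
      simpa [Nat.pos_iff_ne_zero] using hpos
    · rintro ⟨rfl, hn⟩
      exact ⟨⟨by simpa [Nat.pos_iff_ne_zero], by simp⟩, fun i hi => by simp at hi, n, rfl⟩
  rw [arndtParts, this]
  split_ifs with hn <;> simp [hn]

noncomputable def arndtSeries (m : ℕ) : ℤ⟦X⟧ :=
  mk fun n => (arndtParts n m : ℤ)

noncomputable def arndtPairSeries : ℤ⟦X⟧ :=
  mk fun s => ((s - 1) / 2 : ℕ)

theorem arndtSeries_zero : arndtSeries 0 = 1 := by
  ext n
  simp [arndtSeries, arndtParts_zero_right, coeff_one]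

theorem arndtSeries_one : arndtSeries 1 = X * PowerSeries.mk 1 := by
  ext (_ | n) <;> simp [arndtSeries, arndtParts_one_right]

theorem arndtSeries_add_two (m : ℕ) : arndtSeries (m + 2) = arndtPairSeries * arndtSeries m := by
  ext n
  simp [arndtSeries, arndtPairSeries, coeff_mul, arndtParts_add_two]

theorem arndtPairSeries_mul : arndtPairSeries * ((1 - X) ^ 2 * (1 + X)) = X ^ 3 := by
  rw [show (1 - X : ℤ⟦X⟧) ^ 2 * (1 + X) = 1 - X ^ 1 - X ^ 2 + X ^ 3 by ring]
  ext d
  simp only [mul_add, mul_sub, mul_one, map_add, map_sub, coeff_mul_X_pow', coeff_X_pow,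
    arndtPairSeries, coeff_mk]
  split_ifs <;> omega

theorem arndtSeries_mul (m : ℕ) :
    arndtSeries m * ((1 - X) ^ m * (1 + X) ^ (m / 2)) = X ^ (m + m / 2) := by
  induction m using Nat.twoStepInduction with
  | zero => simp [arndtSeries_zero]
  | one => simp [arndtSeries_one, mul_assoc, mk_one_mul_one_sub_eq_one]
  | more m ih _ =>
    rw [arndtSeries_add_two, show (m + 2) / 2 = m / 2 + 1 by omega]
    linear_combination (arndtSeries m * ((1 - X) ^ m * (1 + X) ^ (m / 2))) * arndtPairSeries_mul +
      X ^ 3 * ih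

theorem PowerSeries.binomialSeries_neg_mul_one_add_X_pow {A : Type*} [CommRing A] (d : ℕ) :
    binomialSeries A (-d : ℤ) * (1 + X) ^ d = 1 := by
  rw [← binomialSeries_nat (R := ℤ), ← binomialSeries_add, neg_add_cancel,
    binomialSeries_zero]

theorem PowerSeries.rescale_neg_one_binomialSeries_neg_mul_one_sub_X_pow {A : Type*} [CommRing A]
    (d : ℕ) :
    rescale (-1 : A) (binomialSeries A (-d : ℤ)) * (1 - X) ^ d = 1 := by
  have : (1 - X : A⟦X⟧) = rescale (-1) (1 + X) := by simp [rescale_X, sub_eq_add_neg]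
  rw [this, ← map_pow, ← map_mul, binomialSeries_neg_mul_one_add_X_pow, map_one]

theorem arndtSeries_eq (m : ℕ) :
    arndtSeries m =
      X ^ (m + m / 2) * (rescale (-1) (binomialSeries ℤ (-m : ℤ)) *
        binomialSeries ℤ (-(m / 2 : ℕ) : ℤ)) := by
  linear_combination
    (rescale (-1) (binomialSeries ℤ (-m : ℤ)) * binomialSeries ℤ (-(m / 2 : ℕ) : ℤ)) *
      arndtSeries_mul m -
    arndtSeries m * rescale_neg_one_binomialSeries_neg_mul_one_sub_X_pow (A := ℤ) m -
    arndtSeries m * rescale (-1) (binomialSeries ℤ (-m : ℤ)) * (1 - X) ^ m *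
      binomialSeries_neg_mul_one_add_X_pow (A := ℤ) (m / 2)

theorem PowerSeries.coeff_rescale_neg_one_binomialSeries_neg (d ℓ : ℕ) :
    coeff ℓ (rescale (-1 : ℤ) (binomialSeries ℤ (-d : ℤ))) =
      Ring.choose ((d : ℤ) + ℓ - 1) ℓ := by
  rw [coeff_rescale, binomialSeries_coeff, Ring.choose_neg, smul_eq_mul, mul_one, Units.smul_def,
    Int.coe_negOnePow_natCast, smul_eq_mul, ← mul_assoc, ← mul_pow]
  simp

theorem PowerSeries.coeff_binomialSeries_neg (d j : ℕ) :
    coeff j (binomialSeries ℤ (-d : ℤ)) = Ring.choose ((d : ℤ) + j - 1) j * (-1) ^ j := by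
  rw [binomialSeries_coeff, Ring.choose_neg, smul_eq_mul, mul_one, Units.smul_def,
    Int.coe_negOnePow_natCast, smul_eq_mul, mul_comm]

/-- for all `n, m ≥ 0`,
`a(n,m) = Σ_{ℓ=0}^{n-m-⌊m/2⌋} C(m+ℓ-1, ℓ) C(n-m-ℓ-1, n-m-⌊m/2⌋-ℓ) (-1)^{n-m-⌊m/2⌋-ℓ}`,
the sum being empty when `n - m - ⌊m/2⌋ < 0` (the `ℕ`-valued range below is then empty). -/
theorem arndtParts_formula (n m : ℕ) :
    (arndtParts n m : ℤ) =
      ∑ ℓ ∈ Finset.range (n + 1 - m - m / 2),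
        genChoose ((m : ℤ) + (ℓ : ℤ) - 1) (ℓ : ℤ) *
          genChoose ((n : ℤ) - (m : ℤ) - (ℓ : ℤ) - 1)
            ((n : ℤ) - (m : ℤ) - ((m / 2 : ℕ) : ℤ) - (ℓ : ℤ)) *
          (-1) ^ (n - m - m / 2 - ℓ) := by
  have hcoeff := congrArg (coeff n) (arndtSeries_eq m)
  rw [arndtSeries, coeff_mk, coeff_X_pow_mul', coeff_mul,
    Nat.sum_antidiagonal_eq_sum_range_succ_mk] at hcoeff
  rw [hcoeff]
  split_ifs with h
  · rw [show n + 1 - m - m / 2 = n - (m + m / 2) + 1 by omega]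
    refine sum_congr rfl fun ℓ hℓ => ?_
    rw [mem_range] at hℓ
    rw [coeff_rescale_neg_one_binomialSeries_neg, coeff_binomialSeries_neg,
      genChoose_natCast_right,
      show (n : ℤ) - m - (m / 2 : ℕ) - ℓ = (n - (m + m / 2) - ℓ : ℕ) by omega,
      genChoose_natCast_right,
      show (n : ℤ) - m - ℓ - 1 = (m / 2 : ℕ) + (n - (m + m / 2) - ℓ : ℕ) - 1 by omega,
      show n - m - m / 2 - ℓ = n - (m + m / 2) - ℓ by omega, mul_assoc]
  · rw [show n + 1 - m - m / 2 = 0 by omega, range_zero, sum_empty]
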